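/- arXiv:0808.3415 — 2 statements merged into one kernel-verified Lean document; each statement's English description precedes it below -/
import Mathlib

section
/- If T is a subsemigroup of S then Cayley(T) divides Cayley(S): there is a subsemigroup C of Cayley(S) and a surjective homomorphism C → Cayley(T), given by restriction to the subtree of words over T¹. -/
/-- φ_s([a_1,...,a_n]) = [s a_1, s a_1 a_2, ..., s a_1 ⋯ a_n] -/
def phi {S : Type*} [Mul S] (s : S) (l : List S) : List S :=
  (l.scanl (· * ·) s).tail

/-- Cayley(S): the subsemigroup of functions on words over S¹ = WithOne S
(under composition) generated by the maps φ_s, s ∈ S. -/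
def Cayley (S : Type*) [Semigroup S] : Subsemigroup (Function.End (List (WithOne S))) :=
  Subsemigroup.closure {f | ∃ s : S, f = phi (s : WithOne S)}


/-!
Embed words over `T¹` into words over `S¹` letterwise. Each generator `φ_t` of `Cayley(T)` is
the restriction of `φ_t ∈ Cayley(S)` to this subtree, and restriction is compatible with
composition, so the elements of `Cayley(S)` that restrict to some element of `Cayley(T)`
form a subsemigroup mapping onto `Cayley(T)`. The restriction is unique because the embedding
of words is injective.
-/

/-- An injective relational morphism `N ⇸ M` is a division of `M` by `N`. -/
theorem exists_surjective_of_functional_relation {M N : Type*} [Mul M] [Mul N]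
    (R : Subsemigroup (M × N)) (hfun : ∀ p ∈ R, ∀ q ∈ R, p.1 = q.1 → p.2 = q.2)
    (hsurj : ∀ n, ∃ m, (m, n) ∈ R) :
    ∃ C : Subsemigroup M, ∃ Φ : C →ₙ* N, Function.Surjective Φ := by
  let C := R.map (MulHom.fst M N)
  have hC (x : C) : ∃ p ∈ R, p.1 = x.1 := Subsemigroup.mem_map.1 x.2
  let Φ (x : C) : N := (Classical.choose (hC x)).2
  have hΦ {x : C} {p : M × N} (hp : p ∈ R) (hpx : p.1 = x.1) : Φ x = p.2 :=
    hfun _ (Classical.choose_spec (hC x)).1 _ hp ((Classical.choose_spec (hC x)).2.trans hpx.symm)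
  refine ⟨C, ⟨Φ, fun x y => ?_⟩, fun n => ?_⟩
  · obtain ⟨p, hp, hpx⟩ := hC x
    obtain ⟨q, hq, hqy⟩ := hC y
    rw [hΦ hp hpx, hΦ hq hqy, hΦ (mul_mem hp hq) (by simp [hpx, hqy])]
    rfl
  · obtain ⟨m, hm⟩ := hsurj n
    exact ⟨⟨m, (m, n), hm, rfl⟩, hΦ hm rfl⟩

theorem List.scanl_mul_map {A B : Type*} [Mul A] [Mul B] (h : A →ₙ* B) (s : A) (l : List A) :
    (l.map h).scanl (· * ·) (h s) = (l.scanl (· * ·) s).map h := by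
  induction l generalizing s with
  | nil => simp
  | cons a l ih => simp only [List.map_cons, List.scanl_cons, ← map_mul, ih]

theorem phi_map {A B : Type*} [Mul A] [Mul B] (h : A →ₙ* B) (s : A) (l : List A) :
    phi (h s) (l.map h) = (phi s l).map h := by
  rw [phi, phi, List.scanl_mul_map, List.map_tail]

def semiconjPairs {α β : Type*} (ι : α → β) :
    Subsemigroup (Function.End β × Function.End α) where
  carrier := {p | Function.Semiconj ι p.2 p.1}
  mul_mem' {p q} (hp : Function.Semiconj ι p.2 p.1) (hq : Function.Semiconj ι q.2 q.1) :=
    hp.comp_right hq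

theorem eq_of_semiconj_of_injective {α β : Type*} {ι : α → β} (hι : Function.Injective ι)
    {f : β → β} {g g' : α → α} (h : Function.Semiconj ι g f)
    (h' : Function.Semiconj ι g' f) : g = g' :=
  funext fun x => hι ((h x).trans (h' x).symm)

def wordEmbedding {S : Type*} [Semigroup S] (T : Subsemigroup S) :
    List (WithOne T) → List (WithOne S) :=
  List.map (WithOne.mapMulHom (MulMemClass.subtype T))

theorem wordEmbedding_injective {S : Type*} [Semigroup S] (T : Subsemigroup S) :
    Function.Injective (wordEmbedding T) :=
  List.map_injective_iff.2 (WithOne.mapMulHom_injective Subtype.val_injective)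

theorem exists_cayley_semiconj {S : Type*} [Semigroup S] (T : Subsemigroup S) {g}
    (hg : g ∈ Cayley T) :
    ∃ f ∈ Cayley S, Function.Semiconj (wordEmbedding T) g f := by
  induction hg using Subsemigroup.closure_induction with
  | mem g hg =>
    obtain ⟨t, rfl⟩ := hg
    exact ⟨phi ((t : S) : WithOne S), Subsemigroup.subset_closure ⟨t, rfl⟩,
      fun l => (phi_map (WithOne.mapMulHom (MulMemClass.subtype T)).toMulHom t l).symm⟩
  | mul g₁ g₂ _ _ ih₁ ih₂ =>
    obtain ⟨f₁, hf₁, h₁⟩ := ih₁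
    obtain ⟨f₂, hf₂, h₂⟩ := ih₂
    exact ⟨f₁ * f₂, mul_mem hf₁ hf₂, h₁.comp_right h₂⟩

/-- If T is a subsemigroup of S then Cayley(T) divides Cayley(S): there is a
subsemigroup C of Cayley(S) and a surjective morphism C → Cayley(T). -/
theorem cayley_divides_of_subsemigroup {S : Type*} [Semigroup S] (T : Subsemigroup S) :
    ∃ C : Subsemigroup (Cayley S), ∃ Φ : C →ₙ* Cayley T, Function.Surjective Φ := by
  refine exists_surjective_of_functional_relation
    ((semiconjPairs (wordEmbedding T)).comap
      ((MulMemClass.subtype (Cayley S)).prodMap (MulMemClass.subtype (Cayley T))))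
    (fun p hp q hq hpq => Subtype.ext <|
      eq_of_semiconj_of_injective (f := p.1.1) (wordEmbedding_injective T) hp <|
        congrArg Subtype.val hpq ▸ hq)
    (fun g => ?_)
  obtain ⟨f, hf, hfg⟩ := exists_cayley_semiconj T g.2
  exact ⟨⟨f, hf⟩, hfg⟩
end

section
/- A finite simple aperiodic semigroup S satisfies Cayley(S) ≅ S. -/
/-- `spow s n` is the (n+1)-st power of s in a semigroup. -/
def spow {S : Type*} [Semigroup S] (s : S) : ℕ → S
  | 0 => s
  | n + 1 => spow s n * s

/-!
Simplicity puts every `x` in the ideal generated by `x²`: `x = a x² b` with `a b ∈ S¹`.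
Iterating gives `x = aᵏ x (x b)ᵏ`, so aperiodicity of `x b` yields `x = x (x b)`, then aperiodicity
of `b` yields `x = x b`, whence `x² = x (x b) = x`. Thus `S` is a band. In a band
`φ_u ∘ φ_w = φ_(u w)`, since the entries `w a₁ ⋯ aₖ` of `φ_w l` are idempotent, and `φ_s [1] = [s]`
recovers `s`; so `s ↦ φ_s` maps `S` isomorphically onto `Cayley S`.
-/

section Aperiodic

variable {M : Type*} [Monoid M]

theorem eq_pow_mul_mul_pow_of_eq_mul_mul {a x c : M} (h : x = a * x * c) (k : ℕ) :
    x = a ^ k * x * c ^ k := by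
  induction k with
  | zero => simp
  | succ k ih =>
    calc x = a ^ k * (a * x * c) * c ^ k := by rw [← h, ← ih]
      _ = a ^ (k + 1) * x * c ^ (k + 1) := by rw [pow_succ, pow_succ']; simp only [mul_assoc]

theorem eq_mul_of_eq_mul_mul {a x c : M} {n : ℕ} (h : x = a * x * c) (hc : c ^ n = c ^ (n + 1)) :
    x = x * c := by
  have hn := eq_pow_mul_mul_pow_of_eq_mul_mul h n
  calc x = a ^ n * x * c ^ (n + 1) := by rw [← hc, ← hn]
    _ = x * c := by rw [pow_succ, ← mul_assoc, ← hn]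

theorem isIdempotentElem_of_eq_mul_mul_mul (haper : ∀ c : M, ∃ n : ℕ, c ^ n = c ^ (n + 1))
    {a x b : M} (h : x = a * (x * x) * b) : IsIdempotentElem x := by
  obtain ⟨n, hn⟩ := haper (x * b)
  have hxxb : x = x * (x * b) :=
    eq_mul_of_eq_mul_mul (a := a) (by simpa only [mul_assoc] using h) hn
  obtain ⟨m, hm⟩ := haper b
  have hxb : x = x * b := eq_mul_of_eq_mul_mul (a := x) (by rwa [← mul_assoc] at hxxb) hm
  calc x * x = x * (x * b) := by rw [← hxb]
    _ = x := hxxb.symm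

end Aperiodic

section Semigroup

variable {S : Type*} [Semigroup S]

theorem WithOne.coe_spow (s : S) (n : ℕ) :
    ((spow s n : S) : WithOne S) = (s : WithOne S) ^ (n + 1) := by
  induction n with
  | zero => simp [spow]
  | succ n ih => rw [spow, WithOne.coe_mul, ih, pow_succ _ (n + 1)]

theorem WithOne.exists_pow_eq_pow_succ (haper : ∀ s : S, ∃ n : ℕ, spow s n = spow s (n + 1))
    (c : WithOne S) : ∃ n : ℕ, c ^ n = c ^ (n + 1) := by
  induction c using WithOne.recOneCoe with
  | one => exact ⟨0, by simp⟩
  | coe s =>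
    obtain ⟨n, hn⟩ := haper s
    exact ⟨n + 1, by rw [← WithOne.coe_spow, ← WithOne.coe_spow, hn]⟩

theorem WithOne.isIdempotentElem (h : ∀ x : S, IsIdempotentElem x) (x : WithOne S) :
    IsIdempotentElem x := by
  induction x using WithOne.recOneCoe with
  | one => exact IsIdempotentElem.one
  | coe s => exact congrArg ((↑) : S → WithOne S) (h s)

theorem exists_eq_mul_mul_of_simple (hsimple : ∀ I : Set S, I.Nonempty →
      (∀ x ∈ I, ∀ s : S, s * x ∈ I ∧ x * s ∈ I) → I = Set.univ) (x z : S) :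
    ∃ u v : WithOne S, (x : WithOne S) = u * z * v := by
  let I : Set S := {y | ∃ u v : WithOne S, (y : WithOne S) = u * z * v}
  have hI : I = Set.univ := by
    refine hsimple I ⟨z, 1, 1, by simp⟩ fun y ⟨u, v, hy⟩ s => ⟨⟨s * u, v, ?_⟩, ⟨u, v * s, ?_⟩⟩ <;>
      simp only [WithOne.coe_mul, hy, mul_assoc]
  exact Set.eq_univ_iff_forall.mp hI x

theorem isIdempotentElem_of_simple_aperiodic (hsimple : ∀ I : Set S, I.Nonempty →
      (∀ x ∈ I, ∀ s : S, s * x ∈ I ∧ x * s ∈ I) → I = Set.univ)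
    (haper : ∀ s : S, ∃ n : ℕ, spow s n = spow s (n + 1)) (x : S) : IsIdempotentElem x := by
  obtain ⟨u, v, h⟩ := exists_eq_mul_mul_of_simple hsimple x (x * x)
  rw [WithOne.coe_mul] at h
  exact WithOne.coe_injective
    (isIdempotentElem_of_eq_mul_mul_mul (WithOne.exists_pow_eq_pow_succ haper) h)

end Semigroup

theorem phi_cons {M : Type*} [Mul M] (a x : M) (l : List M) :
    phi a (x :: l) = (a * x) :: phi (a * x) l := by
  cases l <;> simp [phi, List.scanl_cons]

theorem phi_phi {M : Type*} [Semigroup M] (h : ∀ x : M, IsIdempotentElem x) (l : List M)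
    (u w : M) :
    phi u (phi w l) = phi (u * w) l := by
  induction l generalizing u w with
  | nil => rfl
  | cons x l ih =>
    rw [phi_cons, phi_cons, ih, phi_cons, mul_assoc u (w * x), (h (w * x)).eq, mul_assoc]

namespace Cayley

variable {S : Type*} [Semigroup S] (h : ∀ x : S, IsIdempotentElem x)

def phiHom : S →ₙ* Function.End (List (WithOne S)) where
  toFun s := phi (s : WithOne S)
  map_mul' u w := funext fun l => by
    rw [WithOne.coe_mul, ← phi_phi (WithOne.isIdempotentElem h)]; rfl

theorem phiHom_injective : Function.Injective (phiHom h) := fun u w huw => by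
  have h1 : phi (u : WithOne S) [1] = phi (w : WithOne S) [1] := congrFun huw [1]
  simp only [phi_cons, mul_one, List.cons.injEq, WithOne.coe_inj] at h1
  exact h1.1

theorem srange_phiHom : (phiHom h).srange = Cayley S := by
  rw [Cayley, ← Subsemigroup.closure_eq (phiHom h).srange, MulHom.coe_srange]
  congr 1
  ext f
  exact exists_congr fun s => eq_comm

noncomputable def mulEquivOfIdempotent : Cayley S ≃* S :=
  (MulEquiv.subsemigroupCongr (srange_phiHom h)).symm.trans
    (MulEquiv.ofBijective (phiHom h).srangeRestrict
      ⟨fun _ _ e => phiHom_injective h (congrArg Subtype.val e),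
        (phiHom h).srangeRestrict_surjective⟩).symm

end Cayley

theorem cayley_of_simple_aperiodic_general {S : Type*} [Semigroup S]
    (hsimple : ∀ I : Set S, I.Nonempty →
      (∀ x ∈ I, ∀ s : S, s * x ∈ I ∧ x * s ∈ I) → I = Set.univ)
    (haper : ∀ s : S, ∃ n : ℕ, spow s n = spow s (n + 1)) :
    Nonempty (Cayley S ≃* S) :=
  ⟨Cayley.mulEquivOfIdempotent (isIdempotentElem_of_simple_aperiodic hsimple haper)⟩

/-- A finite simple aperiodic semigroup S satisfies Cayley(S) ≅ S. -/
theorem cayley_of_simple_aperiodic {S : Type*} [Semigroup S] [Fintype S]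
    (hsimple : ∀ I : Set S, I.Nonempty →
      (∀ x ∈ I, ∀ s : S, s * x ∈ I ∧ x * s ∈ I) → I = Set.univ)
    (haper : ∀ s : S, ∃ n : ℕ, spow s n = spow s (n + 1)) :
    Nonempty (Cayley S ≃* S) :=
  cayley_of_simple_aperiodic_general hsimple haper
end
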